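/- Let α, β > 0 with α + β > 1 and let τ, ω be positive continuous functions on [a,b]. Suppose f : [a,b] → ℝ is absolutely continuous with f(a)=0 and ∫ₐᵇ |f'(x)|^{α+β} τ(x) dx < ∞. Then ∫ₐᵇ |f(x)|^β |f'(x)|^α ω(x) dx ≤ (α/(α+β))^{α/(α+β)} · L · ∫ₐᵇ |f'(x)|^{α+β} τ(x) dx, where L = [ ∫ₐᵇ ( ∫ₐˣ τ(t)^{1/(1−α−β)} dt )^{α+β−1} ω(x)^{(α+β)/β} τ(x)^{−α/β} dx ]^{β/(α+β)}, assuming L < ∞. -/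

import Mathlib

/-!
By Hölder's inequality on `[a, x]` with the weight split `|f'| = τ^{-1/p} · (|f'| τ^{1/p})`,
`p = α + β`, one gets `|f x| ≤ G(x)^{1 - 1/p} F(x)^{1/p}`, where `G` and `F` are the primitives of
`τ^{1/(1-p)}` and of `g = |f'|^p τ`. Hence the integrand is at most `X^{β/p} Y^{α/p}` with
`X = G^{p-1} ω^{p/β} τ^{-α/β}` (whose integral is `L^{p/β}`) and `Y = F^{β/α} g`, and a second
Hölder inequality reduces the claim to `∫ₐᵇ F^{β/α} g = (α/p) F(b)^{p/α}`, the chain rule for the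
absolutely continuous function `F`.
-/

open MeasureTheory Set intervalIntegral

theorem AbsolutelyContinuousOnInterval.comp_lipschitzOnWith {X Y : Type*} [PseudoMetricSpace X]
    [PseudoMetricSpace Y] {f : ℝ → X} {φ : X → Y} {a b : ℝ} {K : NNReal} {s : Set X}
    (hφ : LipschitzOnWith K φ s) (hfs : MapsTo f (uIcc a b) s)
    (hf : AbsolutelyContinuousOnInterval f a b) :
    AbsolutelyContinuousOnInterval (φ ∘ f) a b := by
  have hK : Filter.Tendsto (fun E : ℕ × (ℕ → ℝ × ℝ) =>
      (K : ℝ) * ∑ i ∈ Finset.range E.1, dist (f (E.2 i).1) (f (E.2 i).2))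
      (AbsolutelyContinuousOnInterval.totalLengthFilter ⊓
        Filter.principal (AbsolutelyContinuousOnInterval.disjWithin a b)) (nhds 0) := by
    simpa using Filter.Tendsto.const_mul (K : ℝ) (show Filter.Tendsto _ _ _ from hf)
  refine squeeze_zero'
    (Filter.Eventually.of_forall fun _ => Finset.sum_nonneg fun _ _ => dist_nonneg) ?_ hK
  filter_upwards [Filter.mem_inf_of_right (Filter.mem_principal_self _)] with E hE
  rw [Finset.mul_sum]
  exact Finset.sum_le_sum fun i hi =>
    hφ.dist_le_mul _ (hfs (hE.1 i hi).1) _ (hfs (hE.1 i hi).2)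

theorem AbsolutelyContinuousOnInterval.comp_contDiff {f φ : ℝ → ℝ} {a b : ℝ}
    (hφ : ContDiff ℝ 1 φ) (hf : AbsolutelyContinuousOnInterval f a b) :
    AbsolutelyContinuousOnInterval (φ ∘ f) a b := by
  obtain ⟨C, hC⟩ := hf.exists_bound
  obtain ⟨K, hK⟩ := hφ.contDiffOn.exists_lipschitzOnWith (s := Metric.closedBall 0 C)
    (by norm_num) (convex_closedBall 0 C) (isCompact_closedBall 0 C)
  exact hf.comp_lipschitzOnWith hK fun x hx => mem_closedBall_zero_iff.2 (hC x hx)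

theorem intervalIntegral.integral_deriv_comp_primitive_mul {φ g : ℝ → ℝ} {a b : ℝ}
    (hφ : ContDiff ℝ 1 φ) (hg : IntervalIntegrable g volume a b) :
    ∫ x in a..b, deriv φ (∫ t in a..x, g t) * g x = φ (∫ t in a..b, g t) - φ 0 := by
  have hFTC := ((hg.absolutelyContinuousOnInterval_intervalIntegral left_mem_uIcc).comp_contDiff
    hφ).integral_deriv_eq_sub
  rw [Function.comp_apply, Function.comp_apply, integral_same] at hFTC
  rw [← hFTC]
  refine integral_congr_ae ?_
  filter_upwards [hg.ae_hasDerivAt_integral] with x hx hxab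
  exact (((hφ.differentiable one_ne_zero _).hasDerivAt.comp x
    (hx (uIoc_subset_uIcc hxab) a left_mem_uIcc)).deriv).symm

theorem intervalIntegral.integral_primitive_rpow_mul {g : ℝ → ℝ} {a b θ : ℝ}
    (hg : IntervalIntegrable g volume a b) (hθ : 0 ≤ θ) :
    ∫ x in a..b, (∫ t in a..x, g t) ^ θ * g x = (∫ t in a..b, g t) ^ (θ + 1) / (θ + 1) := by
  have hθ1 : θ + 1 ≠ 0 := by positivity
  have hφ : ContDiff ℝ 1 fun s : ℝ => s ^ (θ + 1) / (θ + 1) :=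
    (Real.contDiff_rpow_const_of_le (by simpa using hθ)).div_const _
  have hφ' : ∀ s : ℝ, deriv (fun s : ℝ => s ^ (θ + 1) / (θ + 1)) s = s ^ θ := fun s => by
    rw [deriv_div_const, Real.deriv_rpow_const, add_sub_cancel_right, mul_div_cancel_left₀ _ hθ1]
  simpa [hφ', Real.zero_rpow hθ1] using integral_deriv_comp_primitive_mul hφ hg

theorem intervalIntegral.rpow_integral_primitive_rpow_mul {g : ℝ → ℝ} {a b α β : ℝ}
    (hα : 0 < α) (hβ : 0 < β) (hg : IntervalIntegrable g volume a b)
    (hg0 : 0 ≤ ∫ t in a..b, g t) :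
    (∫ x in a..b, (∫ t in a..x, g t) ^ (β / α) * g x) ^ (α / (α + β)) =
      (α / (α + β)) ^ (α / (α + β)) * ∫ t in a..b, g t := by
  have hint : ∫ x in a..b, (∫ t in a..x, g t) ^ (β / α) * g x =
      α / (α + β) * (∫ t in a..b, g t) ^ ((α + β) / α) := by
    rw [integral_primitive_rpow_mul hg (by positivity),
      show β / α + 1 = (α + β) / α by field_simp; ring]
    field_simp
  rw [hint, Real.mul_rpow (by positivity) (by positivity), ← Real.rpow_mul hg0,
    show (α + β) / α * (α / (α + β)) = 1 by field_simp, Real.rpow_one]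

theorem IntervalIntegrable.continuousOn_primitive_Icc {g : ℝ → ℝ} {a b : ℝ} (hab : a ≤ b)
    (hg : IntervalIntegrable g volume a b) :
    ContinuousOn (fun x => ∫ t in a..x, g t) (Icc a b) :=
  uIcc_of_le hab ▸ continuousOn_primitive_interval' hg left_mem_uIcc

theorem MeasureTheory.integral_le_rpow_mul_rpow_of_le {Ω : Type*} [MeasurableSpace Ω]
    {μ : Measure Ω} {h X Y : Ω → ℝ} {s t : ℝ} (hs : 0 ≤ s) (ht : 0 ≤ t) (hst : s + t = 1)
    (hX0 : 0 ≤ᵐ[μ] X) (hY0 : 0 ≤ᵐ[μ] Y) (hX : Integrable X μ) (hY : Integrable Y μ)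
    (hh0 : 0 ≤ᵐ[μ] h) (hh : h ≤ᵐ[μ] fun x => X x ^ s * Y x ^ t) :
    ∫ x, h x ∂μ ≤ (∫ x, X x ∂μ) ^ s * (∫ x, Y x ∂μ) ^ t := by
  have hIX := integral_nonneg_of_ae hX0
  have hIY := integral_nonneg_of_ae hY0
  by_cases hhi : Integrable h μ
  swap
  · rw [integral_undef hhi]
    positivity
  rw [← ENNReal.ofReal_le_ofReal_iff (by positivity), ofReal_integral_eq_lintegral_ofReal hhi hh0,
    ENNReal.ofReal_mul (by positivity), ← ENNReal.ofReal_rpow_of_nonneg hIX hs,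
    ← ENNReal.ofReal_rpow_of_nonneg hIY ht, ofReal_integral_eq_lintegral_ofReal hX hX0,
    ofReal_integral_eq_lintegral_ofReal hY hY0]
  calc ∫⁻ x, ENNReal.ofReal (h x) ∂μ
      ≤ ∫⁻ x, ENNReal.ofReal (X x) ^ s * ENNReal.ofReal (Y x) ^ t ∂μ := by
        refine lintegral_mono_ae ?_
        filter_upwards [hh, hX0, hY0] with x hx hXx hYx
        rw [ENNReal.ofReal_rpow_of_nonneg hXx hs, ENNReal.ofReal_rpow_of_nonneg hYx ht,
          ← ENNReal.ofReal_mul (Real.rpow_nonneg hXx s)]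
        exact ENNReal.ofReal_le_ofReal hx
    _ ≤ _ := ENNReal.lintegral_mul_norm_pow_le hX.aemeasurable.ennreal_ofReal
        hY.aemeasurable.ennreal_ofReal hs ht hst

theorem intervalIntegral.integral_le_rpow_mul_rpow_of_le {h X Y : ℝ → ℝ} {a b s t : ℝ}
    (hab : a ≤ b) (hs : 0 ≤ s) (ht : 0 ≤ t) (hst : s + t = 1)
    (hX0 : ∀ x ∈ Icc a b, 0 ≤ X x) (hY0 : ∀ x ∈ Icc a b, 0 ≤ Y x)
    (hX : IntervalIntegrable X volume a b) (hY : IntervalIntegrable Y volume a b)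
    (hh0 : ∀ x ∈ Icc a b, 0 ≤ h x) (hh : ∀ x ∈ Icc a b, h x ≤ X x ^ s * Y x ^ t) :
    ∫ x in a..b, h x ≤ (∫ x in a..b, X x) ^ s * (∫ x in a..b, Y x) ^ t := by
  have hae {P : ℝ → Prop} (hP : ∀ x ∈ Icc a b, P x) : ∀ᵐ x ∂volume.restrict (Ioc a b), P x :=
    ae_restrict_of_forall_mem measurableSet_Ioc fun x hx => hP x (Ioc_subset_Icc_self hx)
  simp only [integral_of_le hab]
  exact MeasureTheory.integral_le_rpow_mul_rpow_of_le hs ht hst (hae hX0) (hae hY0) hX.1 hY.1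
    (hae hh0) (hae hh)

theorem rpow_weight_mul_rpow_eq {τ y p : ℝ} (hτ : 0 < τ) (hy : 0 ≤ y) (hp : 1 < p) :
    (τ ^ (1 / (1 - p))) ^ (1 - 1 / p) * (y ^ p * τ) ^ (1 / p) = y := by
  have hp0 : p ≠ 0 := by positivity
  have hp1 : 1 - p ≠ 0 := by linarith
  rw [← Real.rpow_mul hτ.le, Real.mul_rpow (by positivity) hτ.le, ← Real.rpow_mul hy,
    mul_one_div_cancel hp0, Real.rpow_one, mul_left_comm, ← Real.rpow_add hτ]
  convert mul_one y
  convert Real.rpow_zero τ using 2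
  field_simp
  ring

theorem abs_integral_le_weighted_holder {u τ : ℝ → ℝ} {a b p : ℝ} (hab : a ≤ b) (hp : 1 < p)
    (hτ : ∀ x ∈ Icc a b, 0 < τ x)
    (hτp : IntervalIntegrable (fun x => τ x ^ (1 / (1 - p))) volume a b)
    (hu : IntervalIntegrable (fun x => |u x| ^ p * τ x) volume a b) :
    |∫ x in a..b, u x| ≤
      (∫ x in a..b, τ x ^ (1 / (1 - p))) ^ (1 - 1 / p) *
        (∫ x in a..b, |u x| ^ p * τ x) ^ (1 / p) :=
  (abs_integral_le_integral_abs hab).trans <|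
    integral_le_rpow_mul_rpow_of_le hab
      (by rw [sub_nonneg, div_le_one (by linarith)]; exact hp.le) (by positivity) (by ring)
      (fun x hx => (Real.rpow_pos_of_pos (hτ x hx) _).le)
      (fun x hx => mul_nonneg (by positivity) (hτ x hx).le) hτp hu (fun x _ => abs_nonneg _)
      (fun x hx => (rpow_weight_mul_rpow_eq (hτ x hx) (abs_nonneg _) hp).ge)

theorem rpow_mul_rpow_mul_le_opial_split {α β y z G F τ ω : ℝ} (hα : 0 < α) (hβ : 0 < β)
    (hy : 0 ≤ y) (hz : 0 ≤ z) (hG : 0 ≤ G) (hF : 0 ≤ F) (hτ : 0 < τ) (hω : 0 < ω)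
    (hyGF : y ≤ G ^ (1 - 1 / (α + β)) * F ^ (1 / (α + β))) :
    y ^ β * z ^ α * ω ≤
      (G ^ (α + β - 1) * (ω ^ ((α + β) / β) * τ ^ (-(α / β)))) ^ (β / (α + β)) *
        (F ^ (β / α) * (z ^ (α + β) * τ)) ^ (α / (α + β)) := by
  calc y ^ β * z ^ α * ω ≤ (G ^ (1 - 1 / (α + β)) * F ^ (1 / (α + β))) ^ β * z ^ α * ω := by
        gcongr
    _ = _ := by
      rw [Real.mul_rpow (by positivity) (by positivity),
        Real.mul_rpow (by positivity) (by positivity),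
        Real.mul_rpow (by positivity) (by positivity),
        Real.mul_rpow (by positivity) (by positivity),
        Real.mul_rpow (by positivity) (by positivity)]
      simp only [← Real.rpow_mul hG, ← Real.rpow_mul hF, ← Real.rpow_mul hω.le,
        ← Real.rpow_mul hτ.le, ← Real.rpow_mul hz]
      have e1 : (1 - 1 / (α + β)) * β = (α + β - 1) * (β / (α + β)) := by field_simp
      have e2 : 1 / (α + β) * β = β / α * (α / (α + β)) := by field_simp
      have e3 : (α + β) / β * (β / (α + β)) = 1 := by field_simp
      have e4 : (α + β) * (α / (α + β)) = α := by field_simp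
      have e5 : -(α / β) * (β / (α + β)) = -(α / (α + β)) := by field_simp
      rw [e1, e2, e3, e4, e5, Real.rpow_one, Real.rpow_neg hτ.le]
      field_simp

theorem integral_opial_le_holder {a b α β : ℝ} {τ ω f f' G F : ℝ → ℝ} (hab : a ≤ b)
    (hα : 0 < α) (hβ : 0 < β) (hτ : ∀ x ∈ Icc a b, 0 < τ x) (hω : ∀ x ∈ Icc a b, 0 < ω x)
    (hG : ∀ x ∈ Icc a b, 0 ≤ G x) (hF : ∀ x ∈ Icc a b, 0 ≤ F x)
    (hfGF : ∀ x ∈ Icc a b, |f x| ≤ G x ^ (1 - 1 / (α + β)) * F x ^ (1 / (α + β)))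
    (hX : IntervalIntegrable
      (fun x => G x ^ (α + β - 1) * (ω x ^ ((α + β) / β) * τ x ^ (-(α / β)))) volume a b)
    (hY : IntervalIntegrable (fun x => F x ^ (β / α) * (|f' x| ^ (α + β) * τ x)) volume a b) :
    ∫ x in a..b, |f x| ^ β * |f' x| ^ α * ω x ≤
      (∫ x in a..b, G x ^ (α + β - 1) * (ω x ^ ((α + β) / β) * τ x ^ (-(α / β)))) ^
          (β / (α + β)) *
        (∫ x in a..b, F x ^ (β / α) * (|f' x| ^ (α + β) * τ x)) ^ (α / (α + β)) :=
  integral_le_rpow_mul_rpow_of_le hab (by positivity) (by positivity) (by field_simp; ring)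
    (fun x hx => by have := hG x hx; have := hω x hx; have := hτ x hx; positivity)
    (fun x hx => by have := hF x hx; have := hτ x hx; positivity) hX hY
    (fun x hx => by have := hω x hx; positivity)
    (fun x hx => rpow_mul_rpow_mul_le_opial_split hα hβ (abs_nonneg _) (abs_nonneg _) (hG x hx)
      (hF x hx) (hτ x hx) (hω x hx) (hfGF x hx))

theorem opial_power_weighted_general (a b α β : ℝ) (hab : a < b)
    (hα : 0 < α) (hβ : 0 < β) (hαβ : 1 < α + β)
    (τ ω : ℝ → ℝ)
    (hτcont : ContinuousOn τ (Set.Icc a b)) (hτpos : ∀ x ∈ Set.Icc a b, 0 < τ x)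
    (hωcont : ContinuousOn ω (Set.Icc a b)) (hωpos : ∀ x ∈ Set.Icc a b, 0 < ω x)
    (f f' : ℝ → ℝ)
    (hf'p : IntervalIntegrable (fun x => |f' x| ^ (α + β) * τ x) MeasureTheory.volume a b)
    (hf : ∀ x ∈ Set.Icc a b, f x = ∫ t in a..x, f' t)
    (L : ℝ)
    (hL : L = (∫ x in a..b,
        (∫ t in a..x, τ t ^ (1 / (1 - α - β))) ^ (α + β - 1) *
          (ω x ^ ((α + β) / β) * τ x ^ (-(α / β)))) ^ (β / (α + β))) :
    ∫ x in a..b, |f x| ^ β * |f' x| ^ α * ω x ≤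
      (α / (α + β)) ^ (α / (α + β)) * L * ∫ x in a..b, |f' x| ^ (α + β) * τ x := by
  rw [sub_sub] at hL
  set g := fun x => |f' x| ^ (α + β) * τ x
  set F := fun x => ∫ t in a..x, g t
  set G := fun x => ∫ t in a..x, τ t ^ (1 / (1 - (α + β)))
  have hτG : IntervalIntegrable (fun t => τ t ^ (1 / (1 - (α + β)))) volume a b :=
    (hτcont.rpow_const fun x hx => Or.inl (hτpos x hx).ne').intervalIntegrable_of_Icc hab.le
  have hsub : ∀ x ∈ Icc a b, Icc a x ⊆ Icc a b := fun x hx => Icc_subset_Icc_right hx.2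
  have hG0 : ∀ x ∈ Icc a b, 0 ≤ G x := fun x hx =>
    integral_nonneg hx.1 fun t ht => (Real.rpow_pos_of_pos (hτpos t (hsub x hx ht)) _).le
  have hF0 : ∀ x ∈ Icc a b, 0 ≤ F x := fun x hx =>
    integral_nonneg hx.1 fun t ht => mul_nonneg (by positivity) (hτpos t (hsub x hx ht)).le
  have hfGF : ∀ x ∈ Icc a b, |f x| ≤ G x ^ (1 - 1 / (α + β)) * F x ^ (1 / (α + β)) :=
    fun x hx => hf x hx ▸ abs_integral_le_weighted_holder hx.1 hαβ
      (fun t ht => hτpos t (hsub x hx ht))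
      (hτG.mono_set (uIcc_subset_uIcc_left (by simpa [uIcc_of_le hab.le] using hx)))
      (hf'p.mono_set (uIcc_subset_uIcc_left (by simpa [uIcc_of_le hab.le] using hx)))
  have hX : IntervalIntegrable
      (fun x => G x ^ (α + β - 1) * (ω x ^ ((α + β) / β) * τ x ^ (-(α / β)))) volume a b :=
    (((hτG.continuousOn_primitive_Icc hab.le).rpow_const fun x _ => Or.inr (by linarith)).mul
      ((hωcont.rpow_const fun x hx => Or.inl (hωpos x hx).ne').mul
        (hτcont.rpow_const fun x hx => Or.inl (hτpos x hx).ne'))).intervalIntegrable_of_Icc hab.le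
  have hY : IntervalIntegrable (fun x => F x ^ (β / α) * g x) volume a b :=
    hf'p.continuousOn_mul (uIcc_of_le hab.le ▸
      (hf'p.continuousOn_primitive_Icc hab.le).rpow_const fun x _ => Or.inr (by positivity))
  calc _ ≤ _ := integral_opial_le_holder hab.le hα hβ hτpos hωpos hG0 hF0 hfGF hX hY
    _ = _ := by
      rw [rpow_integral_primitive_rpow_mul hα hβ hf'p (hF0 b (right_mem_Icc.2 hab.le)), ← hL]
      ring

/-- Weighted one-dimensional Opial-type inequality (real case of Corollary 3.17):
for `α, β > 0`, `α + β > 1`, positive continuous weights `τ, ω` on `[a,b]`, and `f`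
absolutely continuous with `f a = 0` and `f' ∈ L^{α+β}(τ)`,
`∫ₐᵇ |f|^β |f'|^α ω ≤ (α/(α+β))^(α/(α+β)) · L · ∫ₐᵇ |f'|^(α+β) τ`, where
`L = (∫ₐᵇ (∫ₐˣ τ^{1/(1−α−β)})^{α+β−1} ω^{(α+β)/β} τ^{−α/β})^{β/(α+β)}`. -/
theorem opial_power_weighted (a b α β : ℝ) (hab : a < b)
    (hα : 0 < α) (hβ : 0 < β) (hαβ : 1 < α + β)
    (τ ω : ℝ → ℝ)
    (hτcont : ContinuousOn τ (Set.Icc a b)) (hτpos : ∀ x ∈ Set.Icc a b, 0 < τ x)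
    (hωcont : ContinuousOn ω (Set.Icc a b)) (hωpos : ∀ x ∈ Set.Icc a b, 0 < ω x)
    (f f' : ℝ → ℝ)
    (hf' : IntervalIntegrable f' MeasureTheory.volume a b)
    (hf'p : IntervalIntegrable (fun x => |f' x| ^ (α + β) * τ x) MeasureTheory.volume a b)
    (hf : ∀ x ∈ Set.Icc a b, f x = ∫ t in a..x, f' t)
    (hfa : f a = 0)
    (L : ℝ)
    (hL : L = (∫ x in a..b,
        (∫ t in a..x, τ t ^ (1 / (1 - α - β))) ^ (α + β - 1) *
          (ω x ^ ((α + β) / β) * τ x ^ (-(α / β)))) ^ (β / (α + β))) :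
    ∫ x in a..b, |f x| ^ β * |f' x| ^ α * ω x ≤
      (α / (α + β)) ^ (α / (α + β)) * L * ∫ x in a..b, |f' x| ^ (α + β) * τ x :=
  opial_power_weighted_general a b α β hab hα hβ hαβ τ ω hτcont hτpos hωcont hωpos f f' hf'p hf L hL
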